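/- Let $h:\mathbb{R}^{m\times n}\to\mathbb{R}$ be twice continuously differentiable, $\lambda>0$, and let $(\bar U,\bar V)$ be a second-order stationary point of $F_r(U,V)=h(UV^\top)+\frac{\lambda}{2}(\|U\|_F^2+\|V\|_F^2)$ with $\mathrm{rank}(\bar U) < r$. Then $\|\nabla h(\bar U\bar V^\top)\|_2 \leq \lambda$, i.e., $\bar U\bar V^\top$ is a first-order stationary point of $f(X)=h(X)+\lambda\|X\|_*$. -/

import Mathlib

open Matrix Finset

attribute [local instance] Matrix.frobeniusNormedAddCommGroup Matrix.frobeniusNormedSpace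

def mdot {m n : ℕ} (A B : Matrix (Fin m) (Fin n) ℝ) : ℝ := ∑ i, ∑ j, A i j * B i j

noncomputable def frob {m n : ℕ} (A : Matrix (Fin m) (Fin n) ℝ) : ℝ := Real.sqrt (mdot A A)

def IsOrth {k : ℕ} (R : Matrix (Fin k) (Fin k) ℝ) : Prop := Rᵀ * R = 1

def rdg (a b : ℕ) {c : ℕ} (x : Fin c → ℝ) : Matrix (Fin a) (Fin b) ℝ :=
  Matrix.of fun i j => if h : (i : ℕ) = (j : ℕ) ∧ (i : ℕ) < c then x ⟨i, h.2⟩ else 0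

noncomputable def descSort {k : ℕ} (f : Fin k → ℝ) : Fin k → ℝ := fun i => f (Tuple.sort f i.rev)

noncomputable def sigCol {a r : ℕ} (X : Matrix (Fin a) (Fin r) ℝ) : Fin r → ℝ :=
  descSort fun i => Real.sqrt ((show (Xᵀ * X).IsHermitian by
    rw [← Matrix.conjTranspose_eq_transpose_of_trivial]; exact Matrix.isHermitian_conjTranspose_mul_self X).eigenvalues i)

noncomputable def sigRow {a b : ℕ} (X : Matrix (Fin a) (Fin b) ℝ) : Fin a → ℝ :=
  descSort fun i => Real.sqrt ((Matrix.isHermitian_mul_conjTranspose_self X).eigenvalues i)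

noncomputable def toDual {m n : ℕ} (G : Matrix (Fin m) (Fin n) ℝ) :
    Matrix (Fin m) (Fin n) ℝ →L[ℝ] ℝ :=
  LinearMap.toContinuousLinearMap
    { toFun := fun Y => mdot G Y
      map_add' := fun Y Z => by
        simp [mdot, Matrix.add_apply, mul_add, Finset.sum_add_distrib]
      map_smul' := fun c Y => by
        simp [mdot, Matrix.smul_apply, smul_eq_mul, Finset.mul_sum, mul_left_comm] }

noncomputable def enorm2 {k : ℕ} (v : Fin k → ℝ) : ℝ := Real.sqrt (∑ i, v i ^ 2)

def subdiff {m n : ℕ} (f : Matrix (Fin m) (Fin n) ℝ → ℝ) (X : Matrix (Fin m) (Fin n) ℝ) :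
    Set (Matrix (Fin m) (Fin n) ℝ) := {G | ∀ Y, f X + mdot G (Y - X) ≤ f Y}

/-
Take `z ≠ 0` with `Ū z = 0`. First-order stationarity in the direction `(0, (V̄ z) zᵀ)` gives
`λ ‖V̄ z‖² = 0`, so `V̄ z = 0` as well. Along a direction `(u zᵀ, w zᵀ)` the product
`(Ū + tA)(V̄ + tB)ᵀ` then moves only at second order, by `t² ‖z‖² u wᵀ`, so the curvature of `F_r`
there is `‖z‖² (2 uᵀ ∇h w + λ (‖u‖² + ‖w‖²))`, free of the Hessian of `h`. Its nonnegativity for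
`u = -∇h w / λ` is `‖∇h w‖ ≤ λ ‖w‖`.
-/

section LineDerivatives

variable {E F : Type*} [NormedAddCommGroup E] [NormedSpace ℝ E]
  [NormedAddCommGroup F] [NormedSpace ℝ F]

theorem hasDerivAt_add_smul (x w : E) (t : ℝ) : HasDerivAt (fun s : ℝ => x + s • w) w t := by
  simpa using ((hasDerivAt_id t).smul_const w).const_add x

theorem fderiv_apply_eq_of_hasDerivAt_line {f : E → F} {x w : E} {e : F}
    (hf : DifferentiableAt ℝ f x) (he : HasDerivAt (fun t : ℝ => f (x + t • w)) e 0) :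
    fderiv ℝ f x w = e := by
  have hf' : HasFDerivAt f (fderiv ℝ f x) (x + (0 : ℝ) • w) := by simpa using hf.hasFDerivAt
  exact (hf'.comp_hasDerivAt 0 (hasDerivAt_add_smul x w 0)).unique he

theorem fderiv_fderiv_apply_eq_of_hasDerivAt_line {f : E → F} (hf : ContDiff ℝ 2 f) {x w : E}
    {e : ℝ → F} {e' : F} (he : ∀ t, HasDerivAt (fun s : ℝ => f (x + s • w)) (e t) t)
    (he' : HasDerivAt e e' 0) :
    fderiv ℝ (fderiv ℝ f) x w w = e' := by
  have hd : e = fun t => fderiv ℝ f (x + t • w) w := funext fun t =>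
    (he t).unique ((hf.differentiable two_ne_zero _).hasFDerivAt.comp_hasDerivAt t
      (hasDerivAt_add_smul x w t))
  have hf' : HasFDerivAt (fderiv ℝ f) (fderiv ℝ (fderiv ℝ f) x) (x + (0 : ℝ) • w) := by
    rw [zero_smul, add_zero]
    exact ((hf.fderiv_right (m := 1) le_rfl).differentiable one_ne_zero x).hasFDerivAt
  have hc : HasDerivAt (fun t : ℝ => fderiv ℝ f (x + t • w)) (fderiv ℝ (fderiv ℝ f) x w) 0 :=
    hf'.comp_hasDerivAt (0 : ℝ) (hasDerivAt_add_smul x w 0)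
  have hline : HasDerivAt (fun t : ℝ => fderiv ℝ f (x + t • w) w)
      (fderiv ℝ (fderiv ℝ f) x w w) 0 := by
    simpa using hc.clm_apply (hasDerivAt_const (0 : ℝ) w)
  exact hline.unique (hd ▸ he')

theorem hasDerivAt_quadratic_curve (a b c : E) (t : ℝ) :
    HasDerivAt (fun s : ℝ => a + s • b + s ^ 2 • c) (b + (2 * t) • c) t := by
  have hsq : HasDerivAt (fun s : ℝ => s ^ 2) (2 * t) t := by
    simpa using hasDerivAt_pow 2 t
  exact (((hasDerivAt_id t).smul_const b).const_add a).add (hsq.smul_const c) |>.congr_deriv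
    (by simp)

end LineDerivatives

theorem hasDerivAt_mul_of_continuousAt_zero {q : ℝ → ℝ} (hq : ContinuousAt q 0) :
    HasDerivAt (fun t => t * q t) (q 0) 0 := by
  rw [hasDerivAt_iff_tendsto_slope_zero]
  refine (hq.tendsto.mono_left nhdsWithin_le_nhds).congr' ?_
  filter_upwards [self_mem_nhdsWithin] with t ht
  simp [inv_mul_cancel_left₀ (show t ≠ 0 from ht)]

theorem Matrix.exists_mulVec_eq_zero_of_rank_lt {m n : Type*} [Fintype n] {K : Type*} [Field K]
    {A : Matrix m n K} (hA : A.rank < Fintype.card n) : ∃ z ≠ 0, A *ᵥ z = 0 := by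
  have hker := LinearMap.finrank_range_add_finrank_ker A.mulVecLin
  rw [Module.finrank_fintype_fun_eq_card] at hker
  obtain ⟨z, hz⟩ := Module.finrank_pos_iff_exists_ne_zero.mp
    (show 0 < Module.finrank K (LinearMap.ker A.mulVecLin) by unfold Matrix.rank at hA; omega)
  exact ⟨z, fun h => hz (Subtype.ext h), z.2⟩

section Frobenius

variable {m n : ℕ}

theorem isBilinearMap_mdot : IsBilinearMap ℝ (mdot : Matrix (Fin m) (Fin n) ℝ → _ → ℝ) where
  add_left _ _ _ := by simp only [mdot, Matrix.add_apply, add_mul, sum_add_distrib]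
  smul_left _ _ _ := by simp only [mdot, Matrix.smul_apply, smul_eq_mul, mul_sum, mul_assoc]
  add_right _ _ _ := by simp only [mdot, Matrix.add_apply, mul_add, sum_add_distrib]
  smul_right _ _ _ := by simp only [mdot, Matrix.smul_apply, smul_eq_mul, mul_sum, mul_left_comm]

theorem mdot_comm (A B : Matrix (Fin m) (Fin n) ℝ) : mdot A B = mdot B A := by
  simp only [mdot, mul_comm]

theorem mdot_add_smul_self (A B : Matrix (Fin m) (Fin n) ℝ) (t : ℝ) :
    mdot (A + t • B) (A + t • B) = mdot A A + 2 * t * mdot A B + t ^ 2 * mdot B B := by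
  simp only [isBilinearMap_mdot.add_left, isBilinearMap_mdot.add_right,
    isBilinearMap_mdot.smul_left, isBilinearMap_mdot.smul_right, mdot_comm B A, smul_eq_mul]
  ring

@[simp]
theorem mdot_zero_right (A : Matrix (Fin m) (Fin n) ℝ) : mdot A 0 = 0 := by
  simp [mdot]

theorem mdot_vecMulVec_right (M : Matrix (Fin m) (Fin n) ℝ) (u : Fin m → ℝ) (v : Fin n → ℝ) :
    mdot M (vecMulVec u v) = u ⬝ᵥ M *ᵥ v := by
  simp only [mdot, vecMulVec_apply, dotProduct, mulVec, mul_sum]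
  exact sum_congr rfl fun i _ => sum_congr rfl fun j _ => by ring

theorem mdot_vecMulVec_vecMulVec (u u' : Fin m → ℝ) (v v' : Fin n → ℝ) :
    mdot (vecMulVec u v) (vecMulVec u' v') = (u ⬝ᵥ u') * (v ⬝ᵥ v') := by
  rw [mdot_vecMulVec_right, vecMulVec_mulVec]
  simp only [dotProduct_smul, MulOpposite.smul_eq_mul_unop, MulOpposite.unop_op,
    dotProduct_comm u' u]

end Frobenius

section BurerMonteiro

variable {m n r : ℕ} {h : Matrix (Fin m) (Fin n) ℝ → ℝ} {lam : ℝ}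

/-- The factored objective `F_r` of the paper. -/
noncomputable def burerMonteiro (h : Matrix (Fin m) (Fin n) ℝ → ℝ) (lam : ℝ)
    (p : Matrix (Fin m) (Fin r) ℝ × Matrix (Fin n) (Fin r) ℝ) : ℝ :=
  h (p.1 * p.2ᵀ) + lam / 2 * (mdot p.1 p.1 + mdot p.2 p.2)

theorem isBilinearMap_mul_transpose :
    IsBilinearMap ℝ fun (A : Matrix (Fin m) (Fin r) ℝ) (B : Matrix (Fin n) (Fin r) ℝ) =>
      A * Bᵀ where
  add_left _ _ _ := Matrix.add_mul _ _ _
  smul_left _ _ _ := Matrix.smul_mul _ _ _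
  add_right _ _ _ := by rw [transpose_add, Matrix.mul_add]
  smul_right _ _ _ := by rw [transpose_smul, Matrix.mul_smul]

theorem contDiff_burerMonteiro {k : WithTop ℕ∞} (hh : ContDiff ℝ k h) :
    ContDiff ℝ k (burerMonteiro (r := r) h lam) := by
  have hprod : ContDiff ℝ k fun p : Matrix (Fin m) (Fin r) ℝ × Matrix (Fin n) (Fin r) ℝ =>
      p.1 * p.2ᵀ :=
    isBilinearMap_mul_transpose.toContinuousBilinearMap.isBoundedBilinearMap.contDiff
  have hsq {a : ℕ} : ContDiff ℝ k fun A : Matrix (Fin a) (Fin r) ℝ => mdot A A :=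
    isBilinearMap_mdot.toContinuousBilinearMap.isBoundedBilinearMap.contDiff.comp
      (contDiff_id.prodMk contDiff_id)
  exact (hh.comp hprod).add
    (contDiff_const.mul ((hsq.comp contDiff_fst).add (hsq.comp contDiff_snd)))

theorem burerMonteiro_add_smul (U : Matrix (Fin m) (Fin r) ℝ) (V : Matrix (Fin n) (Fin r) ℝ)
    (A : Matrix (Fin m) (Fin r) ℝ) (B : Matrix (Fin n) (Fin r) ℝ) (t : ℝ) :
    burerMonteiro h lam ((U, V) + t • (A, B)) =
      h (U * Vᵀ + t • (A * Vᵀ + U * Bᵀ) + t ^ 2 • (A * Bᵀ)) +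
        (lam / 2 * (mdot U U + mdot V V) + t * (lam * (mdot U A + mdot V B)) +
          t ^ 2 * (lam / 2 * (mdot A A + mdot B B))) := by
  have hprod :
      (U + t • A) * (V + t • B)ᵀ = U * Vᵀ + t • (A * Vᵀ + U * Bᵀ) + t ^ 2 • (A * Bᵀ) := by
    simp only [transpose_add, transpose_smul, Matrix.add_mul, Matrix.mul_add, Matrix.smul_mul,
      Matrix.mul_smul]
    module
  simp only [burerMonteiro, Prod.fst_add, Prod.snd_add, Prod.smul_fst, Prod.smul_snd, hprod,
    mdot_add_smul_self]
  ring

variable {G : Matrix (Fin m) (Fin n) ℝ → Matrix (Fin m) (Fin n) ℝ}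

theorem hasDerivAt_burerMonteiro_line (hgrad : ∀ X, HasFDerivAt h (toDual (G X)) X)
    (U : Matrix (Fin m) (Fin r) ℝ) (V : Matrix (Fin n) (Fin r) ℝ)
    (A : Matrix (Fin m) (Fin r) ℝ) (B : Matrix (Fin n) (Fin r) ℝ) (t : ℝ) :
    HasDerivAt (fun s : ℝ => burerMonteiro h lam ((U, V) + s • (A, B)))
      (mdot (G (U * Vᵀ + t • (A * Vᵀ + U * Bᵀ) + t ^ 2 • (A * Bᵀ)))
          (A * Vᵀ + U * Bᵀ + (2 * t) • (A * Bᵀ)) +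
        (lam * (mdot U A + mdot V B) + (2 * t) * (lam / 2 * (mdot A A + mdot B B)))) t := by
  simp_rw [burerMonteiro_add_smul]
  exact ((hgrad _).comp_hasDerivAt t (hasDerivAt_quadratic_curve _ _ _ t)).add
    (hasDerivAt_quadratic_curve (E := ℝ) _ _ _ t)

theorem fderiv_burerMonteiro_apply (hgrad : ∀ X, HasFDerivAt h (toDual (G X)) X)
    {U : Matrix (Fin m) (Fin r) ℝ} {V : Matrix (Fin n) (Fin r) ℝ}
    (hd : DifferentiableAt ℝ (burerMonteiro h lam) (U, V))
    (A : Matrix (Fin m) (Fin r) ℝ) (B : Matrix (Fin n) (Fin r) ℝ) :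
    fderiv ℝ (burerMonteiro h lam) (U, V) (A, B) =
      mdot (G (U * Vᵀ)) (A * Vᵀ + U * Bᵀ) + lam * (mdot U A + mdot V B) := by
  refine fderiv_apply_eq_of_hasDerivAt_line hd ?_
  simpa using hasDerivAt_burerMonteiro_line hgrad U V A B 0

theorem fderiv_fderiv_burerMonteiro_apply (hh : ContDiff ℝ 2 h)
    (hgrad : ∀ X, HasFDerivAt h (toDual (G X)) X)
    {U : Matrix (Fin m) (Fin r) ℝ} {V : Matrix (Fin n) (Fin r) ℝ}
    {A : Matrix (Fin m) (Fin r) ℝ} {B : Matrix (Fin n) (Fin r) ℝ}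
    (hAB : A * Vᵀ + U * Bᵀ = 0) :
    fderiv ℝ (fderiv ℝ (burerMonteiro h lam)) (U, V) (A, B) (A, B) =
      2 * mdot (G (U * Vᵀ)) (A * Bᵀ) + lam * (mdot A A + mdot B B) := by
  -- `(U + tA)(V + tB)ᵀ` has no linear term, so the Hessian of `h` never enters.
  set q : ℝ → ℝ := fun t => mdot (G (U * Vᵀ + t ^ 2 • (A * Bᵀ))) (A * Bᵀ)
  have hq : ContinuousAt q 0 := by
    have hq' : q = fun t => fderiv ℝ h (U * Vᵀ + t ^ 2 • (A * Bᵀ)) (A * Bᵀ) :=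
      funext fun t => by rw [(hgrad _).fderiv]; rfl
    rw [hq']
    exact ((hh.continuous_fderiv two_ne_zero).comp (by fun_prop)).clm_apply continuous_const
      |>.continuousAt
  refine fderiv_fderiv_apply_eq_of_hasDerivAt_line (contDiff_burerMonteiro hh)
    (e := fun t => 2 * (t * q t) +
      (lam * (mdot U A + mdot V B) + t * (lam * (mdot A A + mdot B B))))
    (fun t => ?_) ?_
  · refine (hasDerivAt_burerMonteiro_line hgrad U V A B t).congr_deriv ?_
    simp only [hAB, smul_zero, add_zero, zero_add, isBilinearMap_mdot.smul_right, smul_eq_mul, q]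
    ring
  · refine ((hasDerivAt_mul_of_continuousAt_zero hq).const_mul 2).add
      (((hasDerivAt_id 0).mul_const _).const_add _) |>.congr_deriv ?_
    simp [q]

theorem mulVec_eq_zero_of_fderiv_burerMonteiro_eq_zero
    (hgrad : ∀ X, HasFDerivAt h (toDual (G X)) X) (hlam : 0 < lam)
    {U : Matrix (Fin m) (Fin r) ℝ} {V : Matrix (Fin n) (Fin r) ℝ}
    (hd : DifferentiableAt ℝ (burerMonteiro h lam) (U, V))
    (hfo : fderiv ℝ (burerMonteiro h lam) (U, V) = 0) {z : Fin r → ℝ} (hUz : U *ᵥ z = 0) :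
    V *ᵥ z = 0 := by
  have hdir := fderiv_burerMonteiro_apply hgrad hd 0 (vecMulVec (V *ᵥ z) z)
  simp only [hfo, _root_.zero_apply, Matrix.zero_mul, transpose_vecMulVec,
    mul_vecMulVec, hUz, zero_vecMulVec, add_zero, mdot_zero_right, mdot_vecMulVec_right, zero_add,
    zero_eq_mul, dotProduct_self_eq_zero] at hdir
  exact hdir.resolve_left hlam.ne'

theorem fderiv_fderiv_burerMonteiro_vecMulVec (hh : ContDiff ℝ 2 h)
    (hgrad : ∀ X, HasFDerivAt h (toDual (G X)) X)
    {U : Matrix (Fin m) (Fin r) ℝ} {V : Matrix (Fin n) (Fin r) ℝ} {z : Fin r → ℝ}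
    (hUz : U *ᵥ z = 0) (hVz : V *ᵥ z = 0) (u : Fin m → ℝ) (w : Fin n → ℝ) :
    fderiv ℝ (fderiv ℝ (burerMonteiro h lam)) (U, V) (vecMulVec u z, vecMulVec w z)
        (vecMulVec u z, vecMulVec w z) =
      (z ⬝ᵥ z) * (2 * (u ⬝ᵥ G (U * Vᵀ) *ᵥ w) + lam * (u ⬝ᵥ u + w ⬝ᵥ w)) := by
  have hlin : vecMulVec u z * Vᵀ + U * (vecMulVec w z)ᵀ = 0 := by
    ext
    simp [vecMulVec_mul, mul_vecMulVec, vecMul_transpose, vecMulVec_apply, hUz, hVz]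
  rw [fderiv_fderiv_burerMonteiro_apply hh hgrad hlin, transpose_vecMulVec,
    vecMulVec_mul_vecMulVec, vecMulVec_smul, isBilinearMap_mdot.smul_right, mdot_vecMulVec_right,
    mdot_vecMulVec_vecMulVec, mdot_vecMulVec_vecMulVec, smul_eq_mul]
  ring

end BurerMonteiro

theorem enorm2_eq_sqrt_dotProduct {k : ℕ} (v : Fin k → ℝ) : enorm2 v = √(v ⬝ᵥ v) := by
  simp only [enorm2, dotProduct, sq]

theorem enorm2_mulVec_le_of_forall_nonneg {m n : ℕ} {M : Matrix (Fin m) (Fin n) ℝ} {lam : ℝ}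
    (hlam : 0 < lam) (hM : ∀ u v, 0 ≤ 2 * (u ⬝ᵥ M *ᵥ v) + lam * (u ⬝ᵥ u + v ⬝ᵥ v))
    (v : Fin n → ℝ) : enorm2 (M *ᵥ v) ≤ lam * enorm2 v := by
  have key : (M *ᵥ v) ⬝ᵥ (M *ᵥ v) ≤ lam ^ 2 * (v ⬝ᵥ v) := by
    have hv := mul_nonneg hlam.le (hM (-lam⁻¹ • M *ᵥ v) v)
    simp only [smul_dotProduct, dotProduct_smul, smul_eq_mul] at hv
    have hexp : lam * (2 * (-lam⁻¹ * (M *ᵥ v ⬝ᵥ M *ᵥ v)) +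
        lam * (-lam⁻¹ * (-lam⁻¹ * (M *ᵥ v ⬝ᵥ M *ᵥ v)) + v ⬝ᵥ v)) =
        lam ^ 2 * (v ⬝ᵥ v) - (M *ᵥ v) ⬝ᵥ (M *ᵥ v) := by
      field_simp
      ring
    linarith
  rw [enorm2_eq_sqrt_dotProduct, enorm2_eq_sqrt_dotProduct, ← Real.sqrt_sq hlam.le,
    ← Real.sqrt_mul (sq_nonneg _)]
  exact Real.sqrt_le_sqrt key

theorem rank_deficient_soc_implies_stationary_general (m n r : ℕ)
    (lam : ℝ) (hlam : 0 < lam)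
    (h : Matrix (Fin m) (Fin n) ℝ → ℝ)
    (G : Matrix (Fin m) (Fin n) ℝ → Matrix (Fin m) (Fin n) ℝ)
    (hC2 : ContDiff ℝ 2 h)
    (hgrad : ∀ X, HasFDerivAt h (toDual (G X)) X)
    (Fr : Matrix (Fin m) (Fin r) ℝ × Matrix (Fin n) (Fin r) ℝ → ℝ)
    (hFr : ∀ p, Fr p = h (p.1 * p.2ᵀ) + lam / 2 * (mdot p.1 p.1 + mdot p.2 p.2))
    (Ub : Matrix (Fin m) (Fin r) ℝ) (Vb : Matrix (Fin n) (Fin r) ℝ)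
    (hfo : fderiv ℝ Fr (Ub, Vb) = 0)
    (hso : ∀ w, 0 ≤ fderiv ℝ (fderiv ℝ Fr) (Ub, Vb) w w)
    (hrank : Ub.rank < r) :
    ∀ v : Fin n → ℝ, enorm2 ((G (Ub * Vbᵀ)).mulVec v) ≤ lam * enorm2 v := by
  obtain rfl : Fr = burerMonteiro h lam := funext hFr
  obtain ⟨z, hz, hUz⟩ := exists_mulVec_eq_zero_of_rank_lt (A := Ub) (by simpa using hrank)
  have hVz : Vb *ᵥ z = 0 := mulVec_eq_zero_of_fderiv_burerMonteiro_eq_zero hgrad hlam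
    ((contDiff_burerMonteiro hC2).differentiable two_ne_zero _) hfo hUz
  have hzz : 0 < z ⬝ᵥ z := by simpa using dotProduct_self_star_pos_iff.mpr hz
  refine enorm2_mulVec_le_of_forall_nonneg hlam fun u w => ?_
  have hcurv := hso (vecMulVec u z, vecMulVec w z)
  rw [fderiv_fderiv_burerMonteiro_vecMulVec hC2 hgrad hUz hVz] at hcurv
  exact (mul_nonneg_iff_of_pos_left hzz).mp hcurv

theorem rank_deficient_soc_implies_stationary (m n r : ℕ) (hmn : m ≤ n)
    (lam : ℝ) (hlam : 0 < lam)
    (h : Matrix (Fin m) (Fin n) ℝ → ℝ)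
    (G : Matrix (Fin m) (Fin n) ℝ → Matrix (Fin m) (Fin n) ℝ)
    (hC2 : ContDiff ℝ 2 h)
    (hgrad : ∀ X, HasFDerivAt h (toDual (G X)) X)
    (Fr : Matrix (Fin m) (Fin r) ℝ × Matrix (Fin n) (Fin r) ℝ → ℝ)
    (hFr : ∀ p, Fr p = h (p.1 * p.2ᵀ) + lam / 2 * (mdot p.1 p.1 + mdot p.2 p.2))
    (Ub : Matrix (Fin m) (Fin r) ℝ) (Vb : Matrix (Fin n) (Fin r) ℝ)
    (hfo : fderiv ℝ Fr (Ub, Vb) = 0)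
    (hso : ∀ w, 0 ≤ fderiv ℝ (fderiv ℝ Fr) (Ub, Vb) w w)
    (hrank : Ub.rank < r) :
    ∀ v : Fin n → ℝ, enorm2 ((G (Ub * Vbᵀ)).mulVec v) ≤ lam * enorm2 v :=
  rank_deficient_soc_implies_stationary_general m n r lam hlam h G hC2 hgrad Fr hFr Ub Vb hfo hso
    hrank
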